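/- arXiv:1503.01284 — 2 statements merged into one kernel-verified Lean document; each statement's English description precedes it below -/
import Mathlib

section
/- Let n ≥ 2 and 1 ≤ m ≤ n−1, let E ⊂ ℝⁿ be an 𝓗ˢ-measurable set with 0 < 𝓗ˢ(E) < ∞, where s > n − m, and let V be an m-dimensional linear subspace of ℝⁿ. Then there exists an 𝓗ˢ-measurable set F ⊂ E with 𝓗ˢ(F) > 0 such that the orthogonal projection proj_V(F) has empty interior in V. -/
/-!
Each fibre of the projection onto `V` is a translate of `Vᗮ`, of dimension `n - m < s`, hence
`𝓗ˢ`-null. Removing from `E` the fibres over a countable dense subset `D ⊆ V` therefore keeps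
all of the measure, while the projection of what remains avoids `D`, so it has empty interior.
-/

open MeasureTheory Set Module

section Fibers

variable {E : Type*} [NormedAddCommGroup E] [InnerProductSpace ℝ E] [MeasurableSpace E]
  [BorelSpace E]

theorem hausdorffMeasure_range_add_submodule_eq_zero {W : Submodule ℝ E} [FiniteDimensional ℝ W]
    {s : ℝ} (hs : finrank ℝ W < s) (x : E) :
    μH[s] (range fun w : W => x + w) = 0 := by
  have hiso : Isometry fun w : W => x + w :=
    (isometry_add_left x).comp isometry_subtype_coe
  rw [← image_univ, hiso.hausdorffMeasure_image (.inl ((Nat.cast_nonneg _).trans hs.le)),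
    Real.hausdorffMeasure_of_finrank_lt hs, Measure.coe_zero, Pi.zero_apply]

variable {K : Submodule ℝ E} [K.HasOrthogonalProjection] [FiniteDimensional ℝ Kᗮ] {s : ℝ}

theorem hausdorffMeasure_orthogonalProjectionOnto_preimage_singleton
    (hs : finrank ℝ Kᗮ < s) (y : K) :
    μH[s] (K.orthogonalProjectionOnto ⁻¹' {y}) = 0 := by
  refine measure_mono_null (fun x hx => ?_) (hausdorffMeasure_range_add_submodule_eq_zero hs y)
  have hxy : x - y ∈ Kᗮ := by
    rw [← K.orthogonalProjectionOnto_eq_zero_iff, map_sub, hx,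
      K.orthogonalProjectionOnto_mem_subspace_eq_self, sub_self]
  exact ⟨⟨x - y, hxy⟩, add_sub_cancel _ _⟩

theorem hausdorffMeasure_orthogonalProjectionOnto_preimage_countable
    (hs : finrank ℝ Kᗮ < s) {D : Set K} (hD : D.Countable) :
    μH[s] (K.orthogonalProjectionOnto ⁻¹' D) = 0 := by
  rw [← biUnion_preimage_singleton]
  exact (measure_biUnion_null_iff hD).2 fun y _ =>
    hausdorffMeasure_orthogonalProjectionOnto_preimage_singleton hs y

end Fibers

theorem interior_image_diff_preimage_of_dense {X Y : Type*} [TopologicalSpace Y] (f : X → Y)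
    (A : Set X) {D : Set Y} (hD : Dense D) : interior (f '' (A \ f ⁻¹' D)) = ∅ :=
  subset_empty_iff.1 <| hD.interior_compl ▸
    interior_mono (image_subset_iff.2 fun _ hx => hx.2)

theorem exists_subset_projection_empty_interior_general (n m : ℕ) (s : ℝ) (hs : (n : ℝ) - m < s)
    (E : Set (EuclideanSpace ℝ (Fin n)))
    (hE : NullMeasurableSet E μH[s])
    (hE0 : 0 < μH[s] E)
    (V : Submodule ℝ (EuclideanSpace ℝ (Fin n))) (hV : Module.finrank ℝ V = m) :
    ∃ F : Set (EuclideanSpace ℝ (Fin n)), F ⊆ E ∧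
      NullMeasurableSet F μH[s] ∧ 0 < μH[s] F ∧
      interior ((Submodule.orthogonalProjectionOnto V) '' F) = (∅ : Set V) := by
  have hcodim : (finrank ℝ Vᗮ : ℝ) < s := by
    have h := V.finrank_add_finrank_orthogonal
    rw [hV, finrank_euclideanSpace_fin] at h
    have h' : (m : ℝ) + finrank ℝ Vᗮ = n := by exact_mod_cast h
    linarith
  obtain ⟨D, hDc, hDd⟩ := TopologicalSpace.exists_countable_dense V
  have hN := hausdorffMeasure_orthogonalProjectionOnto_preimage_countable hcodim hDc
  refine ⟨E \ V.orthogonalProjectionOnto ⁻¹' D, sdiff_subset, hE.diff (.of_null hN),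
    by rwa [measure_sdiff_null hN], interior_image_diff_preimage_of_dense _ _ hDd⟩

/-- **Failure of the strong non-empty-interior projection theorem.** Let `1 ≤ m ≤ n−1`,
let `E ⊆ ℝⁿ` be `𝓗ˢ`-measurable with `0 < 𝓗ˢ(E) < ∞` where `s > n − m`, and let `V` be an
`m`-dimensional subspace of `ℝⁿ`. Then there is an `𝓗ˢ`-measurable `F ⊆ E` with
`𝓗ˢ(F) > 0` whose orthogonal projection to `V` has empty interior in `V`. -/
theorem exists_subset_projection_empty_interior (n m : ℕ) (hn : 2 ≤ n)
    (hm1 : 1 ≤ m) (hm2 : m ≤ n - 1) (s : ℝ) (hs : (n : ℝ) - m < s)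
    (E : Set (EuclideanSpace ℝ (Fin n)))
    (hE : NullMeasurableSet E μH[s])
    (hE0 : 0 < μH[s] E) (hEfin : μH[s] E < ⊤)
    (V : Submodule ℝ (EuclideanSpace ℝ (Fin n))) (hV : Module.finrank ℝ V = m) :
    ∃ F : Set (EuclideanSpace ℝ (Fin n)), F ⊆ E ∧
      NullMeasurableSet F μH[s] ∧ 0 < μH[s] F ∧
      interior ((Submodule.orthogonalProjectionOnto V) '' F) = (∅ : Set V) :=
  exists_subset_projection_empty_interior_general n m s hs E hE hE0 V hV
end

section
/- Let E ⊂ ℝⁿ be an 𝓗ˢ-measurable set with 0 < 𝓗ˢ(E) < ∞, where s > 0. Then there exists a countable collection (E_i)_{i≥1} of pairwise disjoint 𝓗ˢ-measurable subsets of E with 𝓗ˢ(E \ ⋃_{i≥1} E_i) = 0, and positive constants c_i > 0, such that for every i, every x ∈ E_i and every r > 0, 𝓗ˢ(E_i ∩ B(x,r)) ≤ c_i rˢ. -/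
/-!
Choose a measurable `E' ⊆ E` with `E' =ᵐ E`; then `ν = 𝓗ˢ|E'` is a finite measure. Let `F k` be
the set of points `x` with `ν(B°(x,r)) ≤ (k+1) rˢ` for all `r ≤ 1/(k+1)`. Since `x ↦ ν(B°(x,r))` is
lower semicontinuous for open balls, each `F k` is closed, and the finite total mass of `ν`
extends the bound on `F k` to all radii (passing to closed balls costs a factor `2ˢ`). A point
outside every `F k` has infinite upper `s`-density for `ν`; by the Vitali covering lemma, the set of
points with upper density above `t` has `𝓗ˢ`-measure at most `8ˢ ν(X) / t`, so these points form
an `𝓗ˢ`-null set. The pieces are `E_k = disjointed (E' ∩ F k)`.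
-/

open MeasureTheory Metric Set Filter Topology
open scoped ENNReal

theorem ediam_closedBall_le_ofReal {X : Type*} [PseudoMetricSpace X] (x : X) (r : ℝ) :
    ediam (closedBall x r) ≤ ENNReal.ofReal (2 * r) :=
  ediam_le_of_forall_dist_le fun y hy z hz ↦ (dist_triangle_right y z x).trans
    (by linarith [mem_closedBall.1 hy, mem_closedBall.1 hz])

theorem ediam_closedBall_four_mul_rpow_le {X : Type*} [PseudoMetricSpace X] [MeasurableSpace X]
    {ν : Measure X} {s t ρ : ℝ} {x : X} (hs : 0 ≤ s) (ht : 0 < t) (hρ : 0 ≤ ρ)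
    (hxρ : ENNReal.ofReal (t * ρ ^ s) ≤ ν (closedBall x ρ)) :
    ediam (closedBall x (4 * ρ)) ^ s ≤ ENNReal.ofReal (8 ^ s / t) * ν (closedBall x ρ) :=
  calc ediam (closedBall x (4 * ρ)) ^ s ≤ ENNReal.ofReal (8 * ρ) ^ s := by
        gcongr; exact (ediam_closedBall_le_ofReal _ _).trans_eq (by ring_nf)
    _ = ENNReal.ofReal (8 ^ s / t) * ENNReal.ofReal (t * ρ ^ s) := by
        rw [ENNReal.ofReal_rpow_of_nonneg (by positivity) hs, ← ENNReal.ofReal_mul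
          (by positivity), Real.mul_rpow (by norm_num) hρ]
        field_simp
    _ ≤ _ := by gcongr

theorem Set.PairwiseDisjoint.countable_of_measure_pos {X : Type*} [MeasurableSpace X]
    (ν : Measure X) [SFinite ν] {ι : Type*}
    {u : Set ι} {B : ι → Set X} (hB : ∀ i ∈ u, MeasurableSet (B i))
    (hdisj : u.PairwiseDisjoint B) (hpos : ∀ i ∈ u, 0 < ν (B i)) : u.Countable := by
  have h := Measure.countable_meas_pos_of_disjoint_iUnion (μ := ν) (As := fun i : u ↦ B i)
    (fun i ↦ hB i i.2) fun i j hij ↦ hdisj i.2 j.2 (Subtype.coe_injective.ne hij)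
  rw [show {i : u | 0 < ν (B i)} = univ from eq_univ_of_forall fun i ↦ hpos i i.2,
    countable_univ_iff] at h
  exact countable_coe_iff.1 h

section

variable {X : Type*} [MetricSpace X] [MeasurableSpace X] [BorelSpace X]

theorem hausdorffMeasure_le_of_frequently_lt_measure_closedBall {s t : ℝ} (hs : 0 ≤ s)
    (ht : 0 < t) (ν : Measure X) {A : Set X}
    (hA : ∀ x ∈ A, ∃ᶠ r in 𝓝[>] 0, ENNReal.ofReal (t * r ^ s) < ν (closedBall x r)) :
    μH[s] A ≤ ENNReal.ofReal (8 ^ s / t) * ν univ := by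
  rcases eq_or_ne (ν univ) ⊤ with hν | hν
  · simp [hν, ENNReal.mul_top, ht, Real.rpow_pos_of_pos]
  have : IsFiniteMeasure ν := ⟨hν.lt_top⟩
  set T : ℝ → Set (X × ℝ) := fun ε ↦
    {p | p.1 ∈ A ∧ p.2 ∈ Ioc 0 ε ∧ ENNReal.ofReal (t * p.2 ^ s) < ν (closedBall p.1 p.2)}
  choose u huT hudisj hucov using fun ε ↦
    Vitali.exists_disjoint_subfamily_covering_enlargement_closedBall (T ε) Prod.fst Prod.snd ε
      (fun p hp ↦ hp.2.1.2) 4 (by norm_num)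
  have (ε : ℝ) : Countable (u ε) :=
    (Set.PairwiseDisjoint.countable_of_measure_pos ν (fun _ _ ↦ measurableSet_closedBall)
      (hudisj ε) fun p hp ↦ zero_le.trans_lt (huT ε hp).2.2).to_subtype
  calc μH[s] A ≤ liminf (fun ε ↦ ∑' p : u ε, ediam (closedBall p.1.1 (4 * p.1.2)) ^ s)
        (𝓝[>] 0) := by
        refine Measure.hausdorffMeasure_le_liminf_tsum s A (fun ε ↦ ENNReal.ofReal (8 * ε)) ?_ _
          (Eventually.of_forall fun ε p ↦ ?_) (eventually_mem_nhdsWithin.mono fun ε hε x hx ↦ ?_)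
        · rw [← ENNReal.ofReal_zero]
          exact ENNReal.tendsto_ofReal (by
            simpa using (tendsto_id.const_mul (8 : ℝ)).mono_left (nhdsWithin_le_nhds (a := 0)))
        · obtain ⟨-, ⟨hp0, hpε⟩, -⟩ := huT ε p.2
          exact (ediam_closedBall_le_ofReal _ _).trans (ENNReal.ofReal_le_ofReal (by linarith))
        · obtain ⟨r, hr, hr0, hrε⟩ := ((hA x hx).and_eventually (Ioo_mem_nhdsGT hε)).exists
          obtain ⟨q, hq, hsub⟩ := hucov ε (x, r) ⟨hx, ⟨hr0, hrε.le⟩, hr⟩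
          exact mem_iUnion.2 ⟨⟨q, hq⟩, hsub (mem_closedBall_self hr0.le)⟩
    _ ≤ ENNReal.ofReal (8 ^ s / t) * ν univ := by
        refine liminf_le_of_frequently_le (Frequently.of_forall fun ε ↦ ?_)
        calc ∑' p : u ε, ediam (closedBall p.1.1 (4 * p.1.2)) ^ s
            ≤ ∑' p : u ε, ENNReal.ofReal (8 ^ s / t) * ν (closedBall p.1.1 p.1.2) :=
              ENNReal.tsum_le_tsum fun p ↦
                ediam_closedBall_four_mul_rpow_le hs ht (huT ε p.2).2.1.1.le (huT ε p.2).2.2.le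
          _ ≤ ENNReal.ofReal (8 ^ s / t) * ν univ := by
              rw [ENNReal.tsum_mul_left]
              gcongr
              exact (tsum_meas_le_meas_iUnion_of_disjoint ν
                (As := fun p : u ε ↦ closedBall p.1.1 p.1.2) (fun _ ↦ measurableSet_closedBall)
                fun p q hpq ↦ hudisj ε p.2 q.2 (Subtype.coe_injective.ne hpq)).trans
                (measure_mono (subset_univ _))

theorem hausdorffMeasure_setOf_forall_frequently_lt_measure_closedBall_eq_zero {s : ℝ}
    (hs : 0 ≤ s) (ν : Measure X) [IsFiniteMeasure ν] :
    μH[s] {x | ∀ t : ℝ, ∃ᶠ r in 𝓝[>] 0, ENNReal.ofReal (t * r ^ s) < ν (closedBall x r)} = 0 := by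
  have hbound : Tendsto (fun t : ℝ ↦ ENNReal.ofReal (8 ^ s / t) * ν univ) atTop (𝓝 0) := by
    rw [← zero_mul (ν univ), ← ENNReal.ofReal_zero]
    exact ENNReal.Tendsto.mul_const (ENNReal.tendsto_ofReal
      (tendsto_const_nhds.div_atTop tendsto_id)) (.inr (measure_ne_top ν univ))
  refine nonpos_iff_eq_zero.1 (ge_of_tendsto hbound ?_)
  filter_upwards [eventually_gt_atTop 0] with t ht
  exact hausdorffMeasure_le_of_frequently_lt_measure_closedBall hs ht ν fun x hx ↦ hx t

end

section

variable {X : Type*} [PseudoMetricSpace X] [MeasurableSpace X]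

def boundedDensitySet (ν : Measure X) (s a δ : ℝ) : Set X :=
  {x | ∀ r, 0 < r → r ≤ δ → ν (ball x r) ≤ ENNReal.ofReal (a * r ^ s)}

theorem lowerSemicontinuous_measure_ball (ν : Measure X) (r : ℝ) :
    LowerSemicontinuous fun x ↦ ν (ball x r) := by
  intro x c (hc : c < ν (ball x r))
  have hmono : Monotone fun n : ℕ ↦ ball x (r - 1 / (n + 1)) := fun m n hmn ↦
    ball_subset_ball (by gcongr)
  have hunion : ⋃ n : ℕ, ball x (r - 1 / (n + 1)) = ball x r := by
    refine Subset.antisymm (iUnion_subset fun n ↦ ball_subset_ball (by simp; positivity))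
      fun y hy ↦ ?_
    obtain ⟨n, hn⟩ := exists_nat_one_div_lt (sub_pos.2 (mem_ball.1 hy))
    exact mem_iUnion.2 ⟨n, mem_ball.2 (by linarith)⟩
  rw [← hunion, hmono.measure_iUnion, lt_iSup_iff] at hc
  obtain ⟨n, hn⟩ := hc
  filter_upwards [ball_mem_nhds x (Nat.one_div_pos_of_nat (n := n))] with y hy
  refine hn.trans_le (measure_mono fun z hz ↦ ?_)
  rw [mem_ball] at *
  linarith [dist_triangle z x y, dist_comm x y]

theorem isClosed_boundedDensitySet (ν : Measure X) (s a δ : ℝ) :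
    IsClosed (boundedDensitySet ν s a δ) := by
  simp only [boundedDensitySet, ofPred_forall]
  exact isClosed_iInter fun r ↦ isClosed_iInter fun _ ↦ isClosed_iInter fun _ ↦
    (lowerSemicontinuous_measure_ball ν r).isClosed_preimage _

theorem compl_iUnion_boundedDensitySet_subset (ν : Measure X) (s : ℝ) :
    (⋃ k : ℕ, boundedDensitySet ν s (k + 1) (k + 1)⁻¹)ᶜ ⊆
      {x | ∀ t : ℝ, ∃ᶠ r in 𝓝[>] 0, ENNReal.ofReal (t * r ^ s) < ν (closedBall x r)} := by
  intro x hx t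
  rw [(nhdsGT_basis (0 : ℝ)).frequently_iff]
  intro ε hε
  obtain ⟨k, hk⟩ := exists_nat_gt (max t ε⁻¹)
  obtain ⟨r, hr0, hrk, hr⟩ : ∃ r, 0 < r ∧ r ≤ (k + 1 : ℝ)⁻¹ ∧
      ENNReal.ofReal ((k + 1) * r ^ s) < ν (ball x r) := by
    by_contra! h
    exact hx (mem_iUnion.2 ⟨k, fun r hr0 hrk ↦ h r hr0 hrk⟩)
  refine ⟨r, ⟨hr0, hrk.trans_lt ?_⟩, lt_of_le_of_lt ?_ (hr.trans_le
    (measure_mono ball_subset_closedBall))⟩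
  · exact inv_lt_of_inv_lt₀ hε (by linarith [le_max_right t ε⁻¹])
  · gcongr
    linarith [le_max_left t ε⁻¹]

theorem measure_ball_le_of_mem_boundedDensitySet {ν : Measure X} {s a δ M : ℝ} {x : X}
    (hx : x ∈ boundedDensitySet ν s a δ) (hs : 0 ≤ s) (ha : 0 ≤ a) (hδ : 0 < δ) (hM : 0 ≤ M)
    (hν : ν univ ≤ ENNReal.ofReal M) {r : ℝ} (hr : 0 < r) :
    ν (ball x r) ≤ ENNReal.ofReal ((a + M / δ ^ s) * r ^ s) := by
  have hMδ : 0 ≤ M / δ ^ s := by positivity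
  rcases le_or_gt r δ with hrδ | hδr
  · refine (hx r hr hrδ).trans (ENNReal.ofReal_le_ofReal ?_)
    nlinarith [Real.rpow_nonneg hr.le s]
  · refine (measure_mono (subset_univ _)).trans (hν.trans (ENNReal.ofReal_le_ofReal ?_))
    have : δ ^ s ≤ r ^ s := Real.rpow_le_rpow hδ.le hδr.le hs
    have : M ≤ M / δ ^ s * r ^ s := by
      rw [div_mul_eq_mul_div, le_div_iff₀ (by positivity)]
      exact mul_le_mul_of_nonneg_left this hM
    nlinarith [Real.rpow_nonneg hr.le s]

theorem measure_closedBall_le_of_mem_boundedDensitySet {ν : Measure X} {s a δ M : ℝ} {x : X}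
    (hx : x ∈ boundedDensitySet ν s a δ) (hs : 0 ≤ s) (ha : 0 ≤ a) (hδ : 0 < δ) (hM : 0 ≤ M)
    (hν : ν univ ≤ ENNReal.ofReal M) {r : ℝ} (hr : 0 < r) :
    ν (closedBall x r) ≤ ENNReal.ofReal ((a + M / δ ^ s) * 2 ^ s * r ^ s) := by
  calc ν (closedBall x r) ≤ ν (ball x (2 * r)) :=
        measure_mono (closedBall_subset_ball (by linarith))
    _ ≤ ENNReal.ofReal ((a + M / δ ^ s) * (2 * r) ^ s) :=
        measure_ball_le_of_mem_boundedDensitySet hx hs ha hδ hM hν (by positivity)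
    _ = ENNReal.ofReal ((a + M / δ ^ s) * 2 ^ s * r ^ s) := by
        rw [Real.mul_rpow zero_le_two hr.le, mul_assoc]

end

theorem exists_density_decomposition_general (n : ℕ) (s : ℝ) (hs : 0 < s)
    (E : Set (EuclideanSpace ℝ (Fin n)))
    (hE : NullMeasurableSet E μH[s])
    (hEfin : μH[s] E < ⊤) :
    ∃ (Ei : ℕ → Set (EuclideanSpace ℝ (Fin n))) (c : ℕ → ℝ),
      (∀ i, Ei i ⊆ E) ∧
      (∀ i, NullMeasurableSet (Ei i) μH[s]) ∧
      Pairwise (Function.onFun Disjoint Ei) ∧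
      μH[s] (E \ ⋃ i, Ei i) = 0 ∧
      ∀ i, 0 < c i ∧ ∀ x ∈ Ei i, ∀ r : ℝ, 0 < r →
        μH[s] (Ei i ∩ Metric.closedBall x r) ≤ ENNReal.ofReal (c i * r ^ s) := by
  obtain ⟨E', hE'E, hE'meas, hE'ae⟩ := hE.exists_measurable_subset_ae_eq
  set ν := μH[s].restrict E'
  have : IsFiniteMeasure ν :=
    isFiniteMeasure_restrict.2 ((measure_mono hE'E).trans_lt hEfin).ne
  set F : ℕ → Set (EuclideanSpace ℝ (Fin n)) := fun k ↦ boundedDensitySet ν s (k + 1) (k + 1)⁻¹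
  set M := (μH[s] E).toReal
  have hνM : ν univ ≤ ENNReal.ofReal M := by
    rw [Measure.restrict_apply_univ, ENNReal.ofReal_toReal hEfin.ne]
    exact measure_mono hE'E
  refine ⟨disjointed fun k ↦ E' ∩ F k, fun k ↦ (k + 1 + M / (k + 1 : ℝ)⁻¹ ^ s) * 2 ^ s,
    fun i ↦ (disjointed_subset _ i).trans (inter_subset_left.trans hE'E),
    fun i ↦ (MeasurableSet.disjointed (fun k ↦
      hE'meas.inter (isClosed_boundedDensitySet ν _ _ _).measurableSet) i).nullMeasurableSet,
    disjoint_disjointed _, ?_, fun i ↦ ⟨by positivity, fun x hx r hr ↦ ?_⟩⟩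
  · rw [iUnion_disjointed, ← inter_iUnion]
    refine measure_mono_null (fun x hx ↦ ?_) (measure_union_null (ae_eq_set.1 hE'ae).2
      (measure_mono_null (compl_iUnion_boundedDensitySet_subset ν s)
        (hausdorffMeasure_setOf_forall_frequently_lt_measure_closedBall_eq_zero hs.le ν)))
    by_cases hxE' : x ∈ E'
    · exact .inr fun hxF ↦ hx.2 ⟨hxE', hxF⟩
    · exact .inl ⟨hx.1, hxE'⟩
  · have hxF : x ∈ F i := (disjointed_subset _ i hx).2
    calc μH[s] (disjointed (fun k ↦ E' ∩ F k) i ∩ closedBall x r)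
        ≤ ν (closedBall x r) := by
          rw [Measure.restrict_apply measurableSet_closedBall]
          exact measure_mono fun y hy ↦ ⟨hy.2, (disjointed_subset _ i hy.1).1⟩
      _ ≤ _ := measure_closedBall_le_of_mem_boundedDensitySet hxF hs.le (by positivity)
          (by positivity) ENNReal.toReal_nonneg hνM hr

/-- **Decomposition into pieces of controlled upper density.** If `E ⊆ ℝⁿ` is
`𝓗ˢ`-measurable with `0 < 𝓗ˢ(E) < ∞`, `s > 0`, then there are pairwise disjoint
`𝓗ˢ`-measurable subsets `E_i ⊆ E` covering `𝓗ˢ`-almost all of `E`, and constants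
`c_i > 0`, with `𝓗ˢ(E_i ∩ B(x,r)) ≤ c_i rˢ` for all `x ∈ E_i` and `r > 0`. -/
theorem exists_density_decomposition (n : ℕ) (s : ℝ) (hs : 0 < s)
    (E : Set (EuclideanSpace ℝ (Fin n)))
    (hE : NullMeasurableSet E μH[s])
    (hE0 : 0 < μH[s] E) (hEfin : μH[s] E < ⊤) :
    ∃ (Ei : ℕ → Set (EuclideanSpace ℝ (Fin n))) (c : ℕ → ℝ),
      (∀ i, Ei i ⊆ E) ∧
      (∀ i, NullMeasurableSet (Ei i) μH[s]) ∧
      Pairwise (Function.onFun Disjoint Ei) ∧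
      μH[s] (E \ ⋃ i, Ei i) = 0 ∧
      ∀ i, 0 < c i ∧ ∀ x ∈ Ei i, ∀ r : ℝ, 0 < r →
        μH[s] (Ei i ∩ Metric.closedBall x r) ≤ ENNReal.ofReal (c i * r ^ s) :=
  exists_density_decomposition_general n s hs E hE hEfin
end
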